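/- arXiv:1303.6981 — 2 statements merged into one kernel-verified Lean document; each statement's English description precedes it below -/
import Mathlib

section
/- Let 𝒞 be a field of subsets of Ω. P : 𝒞 → [0,1] is coherent in betting system 2 if and only if P is a countably additive probability on 𝒞. -/
open Filter MeasureTheory ENNReal

variable {Ω : Type*}

noncomputable def ind (A : Set Ω) (ω : Ω) : ℝ := A.indicator (fun _ => (1:ℝ)) ω

def SeriesTendsTo (f : ℕ → ℝ) (x : ℝ) : Prop :=
  Tendsto (fun n => ∑ i ∈ Finset.range n, f i) atTop (nhds x)

def SeriesConv (f : ℕ → ℝ) : Prop := ∃ x, SeriesTendsTo f x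

noncomputable def bterm (P : Set Ω → ℝ) (α : ℕ → ℝ) (A : ℕ → Set Ω) (ω : Ω) (i : ℕ) : ℝ :=
  α i * (ind (A i) ω - P (A i))

def IsSetField (C : Set (Set Ω)) : Prop :=
  Set.univ ∈ C ∧ (∀ A ∈ C, Aᶜ ∈ C) ∧ ∀ A ∈ C, ∀ B ∈ C, A ∪ B ∈ C

def System1 (C : Set (Set Ω)) (α : ℕ → ℝ) (A : ℕ → Set Ω) : Prop :=
  (∀ i, A i ∈ C) ∧ {i | α i ≠ 0}.Finite

def System2 (C : Set (Set Ω)) (P : Set Ω → ℝ) (α : ℕ → ℝ) (A : ℕ → Set Ω) : Prop :=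
  (∀ i, A i ∈ C) ∧ Summable (fun i => |α i| * P (A i)) ∧
    ∀ ω, SeriesConv (bterm P α A ω)

def System2A (C : Set (Set Ω)) (P : Set Ω → ℝ) (α : ℕ → ℝ) (A : ℕ → Set Ω) : Prop :=
  (∀ i, A i ∈ C) ∧ ∀ ω, Summable (fun i => |bterm P α A ω i|)

def System2B (C : Set (Set Ω)) (P : Set Ω → ℝ) (α : ℕ → ℝ) (A : ℕ → Set Ω) : Prop :=
  (∀ i, A i ∈ C) ∧ ∃ M : ℝ, ∀ ω, ∀ n, ∑ i ∈ Finset.range n, |bterm P α A ω i| ≤ M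

def System3 (C : Set (Set Ω)) (P : Set Ω → ℝ) (α : ℕ → ℝ) (A : ℕ → Set Ω) : Prop :=
  (∀ i, A i ∈ C) ∧ SeriesConv (fun i => α i * P (A i)) ∧
    ∀ ω, SeriesConv (bterm P α A ω)

def IncoherentIn (P : Set Ω → ℝ) (S : (ℕ → ℝ) → (ℕ → Set Ω) → Prop) : Prop :=
  ∃ α A, S α A ∧ ∃ ε > (0:ℝ), ∀ ω, ∃ L, SeriesTendsTo (bterm P α A ω) L ∧ L ≤ -ε

def CoherentIn (P : Set Ω → ℝ) (S : (ℕ → ℝ) → (ℕ → Set Ω) → Prop) : Prop :=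
  ¬ IncoherentIn P S

def IsNullSet (C : Set (Set Ω)) (P : Set Ω → ℝ) (Z : Set Ω) : Prop :=
  ∀ δ : ℝ, 0 < δ → ∃ Zd ∈ C, Z ⊆ Zd ∧ P Zd < δ

def WeaklyIncoherentIn (C : Set (Set Ω)) (P : Set Ω → ℝ)
    (S : (ℕ → ℝ) → (ℕ → Set Ω) → Prop) : Prop :=
  ∃ α A, S α A ∧ ∃ ε > (0:ℝ), ∃ Z : Set Ω, IsNullSet C P Z ∧
    ∀ ω ∉ Z, ∃ L, SeriesTendsTo (bterm P α A ω) L ∧ L ≤ -ε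

def StronglyCoherentIn (C : Set (Set Ω)) (P : Set Ω → ℝ)
    (S : (ℕ → ℝ) → (ℕ → Set Ω) → Prop) : Prop :=
  ¬ WeaklyIncoherentIn C P S

def IrrationalIn (P : Set Ω → ℝ) (S : (ℕ → ℝ) → (ℕ → Set Ω) → Prop) : Prop :=
  ∃ α A, S α A ∧ ∀ ω, ∃ L, SeriesTendsTo (bterm P α A ω) L ∧ L < 0

def RationalIn (P : Set Ω → ℝ) (S : (ℕ → ℝ) → (ℕ → Set Ω) → Prop) : Prop :=
  ¬ IrrationalIn P S

def IsCAProb (C : Set (Set Ω)) (P : Set Ω → ℝ) : Prop :=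
  P Set.univ = 1 ∧ (∀ A ∈ C, 0 ≤ P A) ∧
  (∀ A ∈ C, ∀ B ∈ C, Disjoint A B → P (A ∪ B) = P A + P B) ∧
  (∀ A : ℕ → Set Ω, (∀ i, A i ∈ C) → Pairwise (Function.onFun Disjoint A) →
    (⋃ i, A i) ∈ C → HasSum (fun i => P (A i)) (P (⋃ i, A i)))

def IsPAtom (C : Set (Set Ω)) (P : Set Ω → ℝ) (F : Set Ω) : Prop :=
  F ∈ C ∧ 0 < P F ∧ ∀ B ∈ C, B ⊆ F → P B = P F ∨ P B = 0

def FiniteAtomicPartition (C : Set (Set Ω)) (P : Set Ω → ℝ) : Prop :=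
  ∃ (n : ℕ) (F : Fin n → Set Ω), (∀ j, IsPAtom C P (F j)) ∧
    Pairwise (Function.onFun Disjoint F) ∧ (⋃ j, F j) = Set.univ

def IsPFinite (C : Set (Set Ω)) (P : Set Ω → ℝ) : Prop :=
  ∀ B : ℕ → Set Ω, (∀ i, B i ∈ C) → (∀ i, B (i+1) ⊆ B i) →
    Tendsto (fun i => P (B i)) atTop (nhds 0) → ∃ j, P (B j) = 0

/-!
A violation of any axiom is exposed by a bet with constant negative balance: a single stake on
`univ`; the stakes `1, -1, -1` on `A ∪ B, A, B`; or a stake on a countable disjoint union against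
all of its pieces, which is admissible because finite additivity and nonnegativity bound the
partial sums of the pieces. Conversely, a countably additive `P` extends (Carathéodory) to a
probability measure under which every single bet is fair. As `∑ |α i| P (A i) < ∞`, the series of
bets is dominated in `L¹`, so the total balance is integrable with expectation zero and cannot be
`≤ -ε` everywhere.
-/

section IntegralTsum

variable {X E : Type*} {_ : MeasurableSpace X} {μ : Measure X} [NormedAddCommGroup E]
  {ι : Type*} {F : ι → X → E}

lemma tsum_lintegral_enorm_ne_top_of_summable_integral_norm (hF_int : ∀ i, Integrable (F i) μ)
    (hF_sum : Summable fun i ↦ ∫ a, ‖F i a‖ ∂μ) : ∑' i, ∫⁻ a, ‖F i a‖ₑ ∂μ ≠ ∞ := by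
  simp_rw [← ofReal_integral_norm_eq_lintegral_enorm (hF_int _)]
  rw [← ENNReal.ofReal_tsum_of_nonneg (fun i ↦ integral_nonneg fun a ↦ norm_nonneg _) hF_sum]
  exact ENNReal.ofReal_ne_top

lemma ae_summable_of_summable_integral_norm [Countable ι] [CompleteSpace E]
    (hF_int : ∀ i, Integrable (F i) μ)
    (hF_sum : Summable fun i ↦ ∫ a, ‖F i a‖ ∂μ) : ∀ᵐ a ∂μ, Summable fun i ↦ F i a := by
  refine (summable_norm_of_tsum_eLpNorm_ne_top le_rfl (fun i ↦ (hF_int i).1) ?_).mono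
    fun a h ↦ h.of_norm
  simpa only [eLpNorm_one_eq_lintegral_enorm] using
    tsum_lintegral_enorm_ne_top_of_summable_integral_norm hF_int hF_sum

lemma integrable_tsum_of_summable_integral_norm [Countable ι] [CompleteSpace E]
    (hF_int : ∀ i, Integrable (F i) μ)
    (hF_sum : Summable fun i ↦ ∫ a, ‖F i a‖ ∂μ) : Integrable (fun a ↦ ∑' i, F i a) μ := by
  refine ⟨?_, ?_⟩
  · refine aestronglyMeasurable_of_tendsto_ae atTop
      (fun s ↦ Finset.aestronglyMeasurable_sum s fun i _ ↦ (hF_int i).1) ?_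
    filter_upwards [ae_summable_of_summable_integral_norm hF_int hF_sum] with a ha
    simp only [Finset.sum_apply]
    exact ha.hasSum
  · calc ∫⁻ a, ‖∑' i, F i a‖ₑ ∂μ ≤ ∫⁻ a, ∑' i, ‖F i a‖ₑ ∂μ :=
          lintegral_mono fun a ↦ enorm_tsum_le_tsum_enorm
      _ = ∑' i, ∫⁻ a, ‖F i a‖ₑ ∂μ := lintegral_tsum fun i ↦ (hF_int i).1.enorm
      _ < ∞ := (tsum_lintegral_enorm_ne_top_of_summable_integral_norm hF_int hF_sum).lt_top

end IntegralTsum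

lemma SeriesTendsTo.neg {f : ℕ → ℝ} {x : ℝ} (h : SeriesTendsTo f x) : SeriesTendsTo (-f) (-x) := by
  simpa only [SeriesTendsTo, Pi.neg_apply, Finset.sum_neg_distrib] using Filter.Tendsto.neg h

lemma bterm_neg (P : Set Ω → ℝ) (α : ℕ → ℝ) (A : ℕ → Set Ω) (ω : Ω) :
    bterm P (-α) A ω = -bterm P α A ω := by
  ext i
  simp [bterm, neg_mul]

lemma ind_union_of_disjoint {A B : Set Ω} (h : Disjoint A B) (ω : Ω) :
    ind (A ∪ B) ω = ind A ω + ind B ω := by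
  unfold ind
  rw [Set.indicator_union_of_disjoint h]

lemma hasSum_ind_iUnion {ι : Type*} {A : ι → Set Ω} (hd : Pairwise (Function.onFun Disjoint A))
    (ω : Ω) : HasSum (fun i ↦ ind (A i) ω) (ind (⋃ i, A i) ω) := by
  by_cases hω : ω ∈ ⋃ i, A i
  · obtain ⟨j, hj⟩ := Set.mem_iUnion.1 hω
    have hzero : ∀ i ≠ j, ind (A i) ω = 0 := fun i hij ↦
      Set.indicator_of_notMem (Set.disjoint_right.1 (hd hij) hj) _
    simpa [ind, Set.indicator_of_mem hω, Set.indicator_of_mem hj] using hasSum_single j hzero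
  · simp only [Set.mem_iUnion, not_exists] at hω
    simp [ind, Set.indicator_of_notMem, hω, hasSum_zero]

lemma IsSetField.isSetRing {C : Set (Set Ω)} (hC : IsSetField C) : IsSetRing C where
  empty_mem := by simpa using hC.2.1 _ hC.1
  union_mem _ _ hs ht := hC.2.2 _ hs _ ht
  sdiff_mem s t hs ht := by
    simpa [Set.sdiff_eq, Set.compl_union] using hC.2.1 _ (hC.2.2 _ (hC.2.1 _ hs) _ ht)

section Content

variable {C : Set (Set Ω)} {P : Set Ω → ℝ}

noncomputable def ofRealAddContent (hC : IsSetRing C) (hnn : ∀ A ∈ C, 0 ≤ P A)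
    (hadd : ∀ A ∈ C, ∀ B ∈ C, Disjoint A B → P (A ∪ B) = P A + P B) : AddContent ℝ≥0∞ C :=
  hC.addContent_of_union (fun s ↦ ENNReal.ofReal (P s))
    (by
      have hempty : P ∅ = 0 := by
        simpa using hadd ∅ hC.empty_mem ∅ hC.empty_mem (Set.disjoint_empty _)
      simp [hempty])
    fun hs ht hd ↦ by rw [hadd _ hs _ ht hd, ENNReal.ofReal_add (hnn _ hs) (hnn _ ht)]

lemma ofRealAddContent_apply (hC : IsSetRing C) (hnn : ∀ A ∈ C, 0 ≤ P A)
    (hadd : ∀ A ∈ C, ∀ B ∈ C, Disjoint A B → P (A ∪ B) = P A + P B) (s : Set Ω) :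
    ofRealAddContent hC hnn hadd s = ENNReal.ofReal (P s) :=
  rfl

lemma sum_le_apply_iUnion (hC : IsSetRing C) (hnn : ∀ A ∈ C, 0 ≤ P A)
    (hadd : ∀ A ∈ C, ∀ B ∈ C, Disjoint A B → P (A ∪ B) = P A + P B) {ι : Type*}
    {A : ι → Set Ω} (hA : ∀ i, A i ∈ C) (hd : Pairwise (Function.onFun Disjoint A))
    (hU : (⋃ i, A i) ∈ C) (s : Finset ι) : ∑ i ∈ s, P (A i) ≤ P (⋃ i, A i) := by
  have hmono := addContent_mono (m := ofRealAddContent hC hnn hadd) hC.isSetSemiring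
    (hC.biUnion_mem s fun i _ ↦ hA i) hU (Set.iUnion₂_subset fun i _ ↦ Set.subset_iUnion A i)
  rw [addContent_biUnion_eq hC (fun i _ ↦ hA i) (hd.set_pairwise _)] at hmono
  simp only [ofRealAddContent_apply] at hmono
  rwa [← ENNReal.ofReal_sum_of_nonneg (fun i _ ↦ hnn _ (hA i)),
    ENNReal.ofReal_le_ofReal_iff (hnn _ hU)] at hmono

end Content

namespace CoherentIn

variable {C : Set (Set Ω)} {P : Set Ω → ℝ}

lemma eq_zero_of_seriesTendsTo (hco : CoherentIn P (System2 C P)) {α : ℕ → ℝ} {A : ℕ → Set Ω}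
    {c : ℝ} (hA : ∀ i, A i ∈ C) (hsum : Summable fun i ↦ |α i| * P (A i))
    (hc : ∀ ω, SeriesTendsTo (bterm P α A ω) c) : c = 0 := by
  rcases lt_trichotomy c 0 with hneg | hzero | hpos
  · exact absurd ⟨α, A, ⟨hA, hsum, fun ω ↦ ⟨c, hc ω⟩⟩, -c, by linarith,
      fun ω ↦ ⟨c, hc ω, by linarith⟩⟩ hco
  · exact hzero
  · have hc' : ∀ ω, SeriesTendsTo (bterm P (-α) A ω) (-c) := fun ω ↦ by
      simpa only [bterm_neg] using (hc ω).neg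
    exact absurd ⟨-α, A, ⟨hA, by simpa using hsum, fun ω ↦ ⟨-c, hc' ω⟩⟩, c, hpos,
      fun ω ↦ ⟨-c, hc' ω, le_rfl⟩⟩ hco

lemma eq_zero_of_sum_finset (hco : CoherentIn P (System2 C P)) {α : ℕ → ℝ} {A : ℕ → Set Ω}
    {c : ℝ} (hA : ∀ i, A i ∈ C) (s : Finset ℕ) (hα : ∀ i ∉ s, α i = 0)
    (hc : ∀ ω, ∑ i ∈ s, bterm P α A ω i = c) : c = 0 := by
  refine hco.eq_zero_of_seriesTendsTo (α := α) hA
    (summable_of_ne_finset_zero (s := s) fun i hi ↦ by simp [hα i hi]) fun ω ↦ ?_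
  rw [← hc ω]
  exact (hasSum_sum_of_ne_finset_zero fun i hi ↦ by simp [bterm, hα i hi]).tendsto_sum_nat

lemma apply_univ (hco : CoherentIn P (System2 C P)) (huniv : Set.univ ∈ C) : P Set.univ = 1 := by
  have h := hco.eq_zero_of_sum_finset (α := Pi.single 0 1) (A := fun _ ↦ Set.univ)
    (c := 1 - P Set.univ) (fun _ ↦ huniv) {0}
    (fun i hi ↦ Pi.single_eq_of_ne (Finset.notMem_singleton.1 hi) _)
    fun ω ↦ by simp [bterm, ind]
  linarith

lemma apply_union (hco : CoherentIn P (System2 C P)) {A B : Set Ω} (hA : A ∈ C) (hB : B ∈ C)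
    (hAB : A ∪ B ∈ C) (hd : Disjoint A B) : P (A ∪ B) = P A + P B := by
  have h := hco.eq_zero_of_sum_finset (α := fun i ↦ [1, -1, -1].getD i 0)
    (A := fun i ↦ [A ∪ B, A, B].getD i A) (c := P A + P B - P (A ∪ B))
    (fun i ↦ by rcases i with _ | _ | _ | i <;> simp [hA, hB, hAB])
    (Finset.range 3) (fun i hi ↦ List.getD_eq_default _ _ (by simpa using hi))
    fun ω ↦ by
      simp only [Finset.sum_range_succ, Finset.sum_range_zero, bterm, List.getD_cons_zero,
        List.getD_cons_succ, ind_union_of_disjoint hd]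
      ring
  linarith

lemma hasSum_apply_iUnion (hco : CoherentIn P (System2 C P)) (hC : IsSetRing C)
    (hnn : ∀ A ∈ C, 0 ≤ P A) (hadd : ∀ A ∈ C, ∀ B ∈ C, Disjoint A B → P (A ∪ B) = P A + P B)
    {A : ℕ → Set Ω} (hA : ∀ i, A i ∈ C) (hd : Pairwise (Function.onFun Disjoint A))
    (hU : (⋃ i, A i) ∈ C) : HasSum (fun i ↦ P (A i)) (P (⋃ i, A i)) := by
  have hs : Summable fun i ↦ P (A i) := summable_of_sum_range_le (fun i ↦ hnn _ (hA i))
    fun n ↦ sum_le_apply_iUnion hC hnn hadd hA hd hU (Finset.range n)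
  suffices h : ∑' i, P (A i) - P (⋃ i, A i) = 0 by
    rw [← sub_eq_zero.1 h]
    exact hs.hasSum
  -- Buy the union and sell each piece: the balance is the constant `∑' P (A i) - P (⋃ A i)`.
  let α' : ℕ → ℝ := fun | 0 => 1 | _ + 1 => -1
  let A' : ℕ → Set Ω := fun | 0 => ⋃ i, A i | i + 1 => A i
  refine hco.eq_zero_of_seriesTendsTo (α := α') (A := A') (fun | 0 => hU | i + 1 => hA i)
    ((summable_nat_add_iff 1).1 (by simpa [α', A'] using hs)) fun ω ↦ ?_
  have hpieces : HasSum (fun i ↦ bterm P α' A' ω (i + 1))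
      (∑' i, P (A i) - ind (⋃ i, A i) ω) := by
    simpa [bterm, α', A', neg_sub] using hs.hasSum.sub (hasSum_ind_iUnion hd ω)
  unfold SeriesTendsTo
  convert ((hasSum_nat_add_iff 1).1 hpieces).tendsto_sum_nat using 2
  simp [bterm, α', A']

end CoherentIn

lemma IsCAProb.exists_probabilityMeasure {C : Set (Set Ω)} {P : Set Ω → ℝ} (hC : IsSetField C)
    (hP : IsCAProb C P) : ∃ (_ : MeasurableSpace Ω) (μ : Measure Ω), IsProbabilityMeasure μ ∧
      ∀ s ∈ C, MeasurableSet s ∧ μ.real s = P s := by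
  obtain ⟨huniv, hnn, hadd, hca⟩ := hP
  have hR := hC.isSetRing
  set m := ofRealAddContent hR hnn hadd
  have hσ : m.IsSigmaSubadditive := isSigmaSubadditive_of_addContent_iUnion_eq_tsum hR
    fun f hf hU hd ↦ by
      simp only [m, ofRealAddContent_apply]
      rw [← (hca f hf hd hU).tsum_eq,
        ENNReal.ofReal_tsum_of_nonneg (fun i ↦ hnn _ (hf i)) (hca f hf hd hU).summable]
  let : MeasurableSpace Ω := MeasurableSpace.generateFrom C
  set μ := m.measure hR.isSetSemiring le_rfl hσ
  have hμ : ∀ s ∈ C, μ s = ENNReal.ofReal (P s) := fun s hs ↦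
    m.measure_eq hR.isSetSemiring rfl hσ hs
  refine ⟨_, μ, ⟨by rw [hμ _ hC.1, huniv, ENNReal.ofReal_one]⟩, fun s hs ↦
    ⟨MeasurableSpace.measurableSet_generateFrom hs, ?_⟩⟩
  rw [measureReal_def, hμ s hs, ENNReal.toReal_ofReal (hnn s hs)]

section FairBet

variable {_ : MeasurableSpace Ω} {μ : Measure Ω} {P : Set Ω → ℝ} {α : ℕ → ℝ} {A : ℕ → Set Ω}

lemma integral_ind {s : Set Ω} (hs : MeasurableSet s) : ∫ ω, ind s ω ∂μ = μ.real s :=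
  integral_indicator_one hs

lemma integrable_ind [IsFiniteMeasure μ] {s : Set Ω} (hs : MeasurableSet s) :
    Integrable (ind s) μ :=
  (integrable_const 1).indicator hs

lemma integrable_bterm [IsFiniteMeasure μ] (hA : ∀ i, MeasurableSet (A i)) (i : ℕ) :
    Integrable (fun ω ↦ bterm P α A ω i) μ :=
  ((integrable_ind (hA i)).sub (integrable_const _)).const_mul _

variable [IsProbabilityMeasure μ]

lemma integral_bterm (hA : ∀ i, MeasurableSet (A i)) (hPA : ∀ i, μ.real (A i) = P (A i))
    (i : ℕ) : ∫ ω, bterm P α A ω i ∂μ = 0 := by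
  simp only [bterm]
  rw [integral_const_mul, integral_sub (integrable_ind (hA i)) (integrable_const _),
    integral_ind (hA i), integral_const, probReal_univ, hPA]
  simp

lemma integral_abs_bterm_le (hA : ∀ i, MeasurableSet (A i)) (hPA : ∀ i, μ.real (A i) = P (A i))
    (i : ℕ) : ∫ ω, |bterm P α A ω i| ∂μ ≤ 2 * (|α i| * P (A i)) := by
  have hP : 0 ≤ P (A i) := hPA i ▸ measureReal_nonneg
  calc ∫ ω, |bterm P α A ω i| ∂μ ≤ ∫ ω, |α i| * (ind (A i) ω + P (A i)) ∂μ := by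
        refine integral_mono (integrable_bterm hA i).abs
          (((integrable_ind (hA i)).add (integrable_const _)).const_mul _) fun ω ↦ ?_
        rw [bterm, abs_mul]
        gcongr
        refine (abs_sub _ _).trans ?_
        rw [abs_of_nonneg (by simp [ind, Set.indicator_nonneg]), abs_of_nonneg hP]
    _ = 2 * (|α i| * P (A i)) := by
        rw [integral_const_mul, integral_add (integrable_ind (hA i)) (integrable_const _),
          integral_ind (hA i), integral_const, probReal_univ, hPA]
        simp only [smul_eq_mul, one_mul]
        ring

end FairBet

theorem coherentIn_system2_of_measure {C : Set (Set Ω)} {P : Set Ω → ℝ} {_ : MeasurableSpace Ω}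
    (μ : Measure Ω) [IsProbabilityMeasure μ] (hμ : ∀ s ∈ C, MeasurableSet s ∧ μ.real s = P s) :
    CoherentIn P (System2 C P) := by
  rintro ⟨α, A, ⟨hAC, hsum, -⟩, ε, hε, hL⟩
  choose L hLlim hLε using hL
  have hA i : MeasurableSet (A i) := (hμ _ (hAC i)).1
  have hPA i : μ.real (A i) = P (A i) := (hμ _ (hAC i)).2
  have hint := integrable_bterm (μ := μ) (P := P) (α := α) hA
  have hsumm : Summable fun i ↦ ∫ ω, ‖bterm P α A ω i‖ ∂μ :=
    (hsum.mul_left 2).of_nonneg_of_le (fun i ↦ integral_nonneg fun _ ↦ norm_nonneg _)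
      (integral_abs_bterm_le hA hPA)
  have hzero : ∫ ω, ∑' i, bterm P α A ω i ∂μ = 0 := by
    rw [← integral_tsum_of_summable_integral_norm hint hsumm]
    simp [integral_bterm hA hPA]
  have hbal : ∀ᵐ ω ∂μ, ∑' i, bterm P α A ω i ≤ -ε := by
    filter_upwards [ae_summable_of_summable_integral_norm hint hsumm] with ω hω
    rw [tendsto_nhds_unique hω.hasSum.tendsto_sum_nat (hLlim ω)]
    exact hLε ω
  have := integral_mono_ae (integrable_tsum_of_summable_integral_norm hint hsumm)
    (integrable_const (-ε)) hbal
  simp only [hzero, integral_const, probReal_univ, smul_eq_mul, one_mul] at this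
  linarith

theorem stmt3 (C : Set (Set Ω)) (P : Set Ω → ℝ) (hC : IsSetField C)
    (hrange : ∀ A ∈ C, P A ∈ Set.Icc (0:ℝ) 1) :
    CoherentIn P (System2 C P) ↔ IsCAProb C P := by
  constructor
  · intro hco
    have hnn : ∀ A ∈ C, 0 ≤ P A := fun A hA ↦ (hrange A hA).1
    have hadd : ∀ A ∈ C, ∀ B ∈ C, Disjoint A B → P (A ∪ B) = P A + P B :=
      fun A hA B hB ↦ hco.apply_union hA hB (hC.2.2 A hA B hB)
    exact ⟨hco.apply_univ hC.1, hnn, hadd,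
      fun A hA hd hU ↦ hco.hasSum_apply_iUnion hC.isSetRing hnn hadd hA hd hU⟩
  · intro hP
    obtain ⟨_, μ, _, hμ⟩ := hP.exists_probabilityMeasure hC
    exact coherentIn_system2_of_measure μ hμ
end

section
/- Let 𝒞 be a field on Ω. P is coherent in betting system 3 if and only if P is a countably additive probability and Ω admits a finite partition into 𝒞-measurable atoms. -/
open Filter MeasureTheory ENNReal

variable {Ω : Type*}

/-!
Necessity. Single bets force `P ≥ 0` and `P univ = 1`, three bets force finite additivity, and
buying `⋃ i, A i` while selling every `A i` (a portfolio with payoff `0` everywhere) forces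
countable additivity. A disjoint sequence of sets `E k` of positive measure gives a sure loss:
ramp slowly from the position `1_{E k} / P (E k)` to `1_{E (k+1)} / P (E (k+1))`, so that the
price stays near `1` while the payoff at every point is eventually `0`. Without such a sequence
every set of positive measure contains an atom, and peeling atoms off `univ` must stop after
finitely many steps, with a null remainder that is absorbed into the last atom.

Sufficiency. By countable additivity each atom `F` contains a point lying in each of the
countably many sets of a given portfolio exactly when that set has full measure in `F`.
Averaging the partial balances at these points with weights `P F` gives exactly `0`, so the
balance cannot be uniformly negative.
-/

open Topology

lemma IsSetField.isSetAlgebra {C : Set (Set Ω)} (hC : IsSetField C) : IsSetAlgebra C where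
  empty_mem := by simpa using hC.2.1 _ hC.1
  compl_mem := fun _ hs => hC.2.1 _ hs
  union_mem := fun _ _ hs ht => hC.2.2 _ hs _ ht

section Indicator

variable {A B : Set Ω} {ω : Ω}

@[simp] lemma ind_of_mem (h : ω ∈ A) : ind A ω = 1 := Set.indicator_of_mem h _

@[simp] lemma ind_of_notMem (h : ω ∉ A) : ind A ω = 0 := Set.indicator_of_notMem h _

lemma ind_nonneg : 0 ≤ ind A ω := Set.indicator_nonneg (fun _ _ => zero_le_one) ω

lemma ind_union (h : Disjoint A B) : ind (A ∪ B) ω = ind A ω + ind B ω := by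
  simp only [ind, Set.indicator_union_of_disjoint h]

end Indicator

section Series

variable {f : ℕ → ℝ} {x : ℝ}

lemma SeriesTendsTo.const_mul (h : SeriesTendsTo f x) (c : ℝ) :
    SeriesTendsTo (fun i => c * f i) (c * x) := by
  simpa only [SeriesTendsTo, ← Finset.mul_sum] using Tendsto.const_mul c h

lemma SeriesTendsTo.sub {g : ℕ → ℝ} {y : ℝ} (hf : SeriesTendsTo f x) (hg : SeriesTendsTo g y) :
    SeriesTendsTo (fun i => f i - g i) (x - y) := by
  simpa only [SeriesTendsTo, Finset.sum_sub_distrib] using Tendsto.sub hf hg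

lemma SeriesTendsTo.of_succ (h : SeriesTendsTo (fun i => f (i + 1)) x) :
    SeriesTendsTo f (f 0 + x) := by
  rw [SeriesTendsTo, ← tendsto_add_atTop_iff_nat 1]
  simpa only [Finset.sum_range_succ', add_comm] using h.const_add (f 0)

lemma seriesTendsTo_ind_iUnion {A : ℕ → Set Ω} (hA : Pairwise (Function.onFun Disjoint A))
    (ω : Ω) : SeriesTendsTo (fun i => ind (A i) ω) (ind (⋃ i, A i) ω) := by
  by_cases hω : ∃ j, ω ∈ A j
  · obtain ⟨j, hj⟩ := hω
    have hA' : (fun i => ind (A i) ω) = fun i => if i = j then 1 else 0 := by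
      funext i
      split_ifs with hij
      · simp [hij, hj]
      · exact ind_of_notMem fun hi => Set.disjoint_left.mp (hA hij) hi hj
    rw [hA', ind_of_mem (Set.mem_iUnion.mpr ⟨j, hj⟩)]
    exact (hasSum_ite_eq j 1).tendsto_sum_nat
  · push Not at hω
    simp [SeriesTendsTo, hω]

end Series

def IsFinitelyAdditive (C : Set (Set Ω)) (P : Set Ω → ℝ) : Prop :=
  ∀ A ∈ C, ∀ B ∈ C, Disjoint A B → P (A ∪ B) = P A + P B

namespace IsFinitelyAdditive

variable {C : Set (Set Ω)} {P : Set Ω → ℝ} {A B : Set Ω}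

lemma empty (hadd : IsFinitelyAdditive C P) (hC : IsSetRing C) : P ∅ = 0 := by
  have h := hadd ∅ hC.empty_mem ∅ hC.empty_mem (Set.disjoint_empty _)
  rw [Set.union_self] at h
  linarith

lemma diff (hadd : IsFinitelyAdditive C P) (hC : IsSetRing C) (hA : A ∈ C) (hB : B ∈ C)
    (hBA : B ⊆ A) : P (A \ B) = P A - P B := by
  have h := hadd B hB (A \ B) (hC.sdiff_mem hA hB) Set.disjoint_sdiff_right
  rw [Set.union_sdiff_cancel hBA] at h
  linarith

lemma mono (hadd : IsFinitelyAdditive C P) (hC : IsSetRing C) (hnn : ∀ A ∈ C, 0 ≤ P A)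
    (hA : A ∈ C) (hB : B ∈ C) (hBA : B ⊆ A) : P B ≤ P A := by
  linarith [hadd.diff hC hA hB hBA, hnn _ (hC.sdiff_mem hA hB)]

lemma biUnion (hadd : IsFinitelyAdditive C P) (hC : IsSetRing C) {ι : Type*} (s : Finset ι)
    {f : ι → Set Ω} (hf : ∀ i ∈ s, f i ∈ C) (hdisj : (s : Set ι).PairwiseDisjoint f) :
    P (⋃ i ∈ s, f i) = ∑ i ∈ s, P (f i) := by
  classical
  induction s using Finset.induction_on with
  | empty => simpa using hadd.empty hC
  | insert a s ha ih =>
    rw [Finset.coe_insert, Set.pairwiseDisjoint_insert] at hdisj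
    have hs : ∀ i ∈ s, f i ∈ C := fun i hi => hf i (Finset.mem_insert_of_mem hi)
    have hdisj_a : Disjoint (f a) (⋃ i ∈ s, f i) := Set.disjoint_iUnion₂_right.mpr
      fun i hi => hdisj.2 i hi fun hai => ha (hai ▸ hi)
    rw [Finset.set_biUnion_insert, Finset.sum_insert ha,
      hadd _ (hf a (Finset.mem_insert_self a s)) _ (hC.biUnion_mem s hs) hdisj_a, ih hs hdisj.1]

end IsFinitelyAdditive

section Books

variable {C : Set (Set Ω)} {P : Set Ω → ℝ}

lemma incoherentIn_system3_of_seriesTendsTo {α : ℕ → ℝ} {A : ℕ → Set Ω} (hA : ∀ i, A i ∈ C)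
    {L : ℝ} {Y : Ω → ℝ} (hprice : SeriesTendsTo (fun i => α i * P (A i)) L)
    (hind : ∀ ω, SeriesTendsTo (fun i => α i * ind (A i) ω) (Y ω)) {ε : ℝ} (hε : 0 < ε)
    (hloss : ∀ ω, Y ω - L ≤ -ε) : IncoherentIn P (System3 C P) := by
  have hbal : ∀ ω, SeriesTendsTo (bterm P α A ω) (Y ω - L) := fun ω => by
    show SeriesTendsTo (fun i => α i * (ind (A i) ω - P (A i))) _
    simpa only [mul_sub] using (hind ω).sub hprice
  exact ⟨α, A, ⟨hA, ⟨L, hprice⟩, fun ω => ⟨_, hbal ω⟩⟩, ε, hε, fun ω => ⟨_, hbal ω, hloss ω⟩⟩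

lemma incoherentIn_system3_of_finite (hC : IsSetRing C) {n : ℕ} (a : Fin n → ℝ)
    (S : Fin n → Set Ω) (hS : ∀ j, S j ∈ C) {ε : ℝ} (hε : 0 < ε)
    (hloss : ∀ ω, ∑ j, a j * (ind (S j) ω - P (S j)) ≤ -ε) : IncoherentIn P (System3 C P) := by
  let α : ℕ → ℝ := fun i => if h : i < n then a ⟨i, h⟩ else 0
  let A : ℕ → Set Ω := fun i => if h : i < n then S ⟨i, h⟩ else ∅
  have hsum : ∀ φ : Set Ω → ℝ, SeriesTendsTo (fun i => α i * φ (A i)) (∑ j, a j * φ (S j)) := by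
    intro φ
    have h : HasSum (fun i => α i * φ (A i)) (∑ i ∈ Finset.range n, α i * φ (A i)) :=
      hasSum_sum_of_ne_finset_zero fun i hi => by simp_all [α]
    rw [← Fin.sum_univ_eq_sum_range] at h
    simpa [SeriesTendsTo, α, A] using h.tendsto_sum_nat
  refine incoherentIn_system3_of_seriesTendsTo (fun i => ?_) (hsum P) (fun ω => hsum (ind · ω))
    hε fun ω => ?_
  · by_cases h : i < n <;> simp [A, h, hS, hC.empty_mem]
  · simpa [← Finset.sum_sub_distrib, mul_sub] using hloss ω

end Books

namespace CoherentIn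

variable {C : Set (Set Ω)} {P : Set Ω → ℝ}

lemma prob_univ (h : CoherentIn P (System3 C P)) (hC : IsSetAlgebra C) : P Set.univ = 1 := by
  by_contra hne
  have hne' : P Set.univ - 1 ≠ 0 := sub_ne_zero.mpr hne
  refine h (incoherentIn_system3_of_finite hC.isSetRing ![P Set.univ - 1] ![Set.univ]
    (by simp [hC.univ_mem]) (by positivity : 0 < (P Set.univ - 1) ^ 2) fun ω => ?_)
  rw [Fin.sum_univ_one, Matrix.cons_val_zero, Matrix.cons_val_zero, ind_of_mem (Set.mem_univ ω)]
  nlinarith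

lemma nonneg (h : CoherentIn P (System3 C P)) (hC : IsSetRing C) : ∀ A ∈ C, 0 ≤ P A := by
  intro A hA
  by_contra! hneg
  refine h (incoherentIn_system3_of_finite hC ![-1] ![A] (by simp [hA]) (neg_pos.mpr hneg)
    fun ω => ?_)
  rw [Fin.sum_univ_one, Matrix.cons_val_zero, Matrix.cons_val_zero]
  linarith [ind_nonneg (A := A) (ω := ω)]

lemma isFinitelyAdditive (h : CoherentIn P (System3 C P)) (hC : IsSetRing C) :
    IsFinitelyAdditive C P := by
  intro A hA B hB hAB
  by_contra hne
  set d := P (A ∪ B) - P A - P B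
  have hd : d ≠ 0 := fun h0 => hne (by linarith)
  refine h (incoherentIn_system3_of_finite hC ![d, -d, -d] ![A ∪ B, A, B] ?_
    (by positivity : 0 < d ^ 2) fun ω => ?_)
  · intro j
    fin_cases j <;> simp [hA, hB, hC.union_mem hA hB]
  · simp only [Fin.sum_univ_three, Matrix.cons_val, ind_union hAB]
    linarith

lemma eq_of_seriesTendsTo_iUnion (h : CoherentIn P (System3 C P)) {A : ℕ → Set Ω}
    (hA : ∀ i, A i ∈ C) (hdisj : Pairwise (Function.onFun Disjoint A))
    (hU : ⋃ i, A i ∈ C) {t : ℝ} (ht : SeriesTendsTo (fun i => P (A i)) t) :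
    t = P (⋃ i, A i) := by
  by_contra hne
  set U := ⋃ i, A i
  have hs : P U - t ≠ 0 := sub_ne_zero.mpr (Ne.symm hne)
  let α : ℕ → ℝ := fun | 0 => P U - t | _ + 1 => -(P U - t)
  let B : ℕ → Set Ω := fun | 0 => U | i + 1 => A i
  have hprice : SeriesTendsTo (fun i => α i * P (B i)) ((P U - t) * P U + -(P U - t) * t) :=
    SeriesTendsTo.of_succ (f := fun i => α i * P (B i)) (ht.const_mul _)
  have hind : ∀ ω, SeriesTendsTo (fun i => α i * ind (B i) ω)
      ((P U - t) * ind U ω + -(P U - t) * ind U ω) := fun ω =>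
    SeriesTendsTo.of_succ (f := fun i => α i * ind (B i) ω)
      ((seriesTendsTo_ind_iUnion hdisj ω).const_mul _)
  refine h (incoherentIn_system3_of_seriesTendsTo (fun i => ?_) hprice hind
    (by positivity : 0 < (P U - t) ^ 2) fun ω => le_of_eq (by ring))
  cases i
  exacts [hU, hA _]

lemma isCAProb (h : CoherentIn P (System3 C P)) (hC : IsSetAlgebra C) : IsCAProb C P := by
  have hnn := h.nonneg hC.isSetRing
  have hadd := h.isFinitelyAdditive hC.isSetRing
  refine ⟨h.prob_univ hC, hnn, hadd, fun A hA hdisj hU => ?_⟩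
  have hbdd : ∀ n, ∑ i ∈ Finset.range n, P (A i) ≤ P (⋃ i, A i) := fun n => by
    rw [← hadd.biUnion hC.isSetRing _ (fun i _ => hA i) (hdisj.set_pairwise _)]
    exact hadd.mono hC.isSetRing hnn hU (hC.isSetRing.biUnion_mem _ fun i _ => hA i)
      (Set.iUnion₂_subset fun i _ => Set.subset_iUnion A i)
  obtain ⟨t, ht⟩ := summable_of_sum_range_le (fun i => hnn _ (hA i)) hbdd
  rwa [← h.eq_of_seriesTendsTo_iUnion hA hdisj hU ht.tendsto_sum_nat]

end CoherentIn

lemma Filter.Tendsto.of_two_mul_of_two_mul_add_one {α : Type*} {l : Filter α} {u : ℕ → α}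
    (h₀ : Tendsto (fun n => u (2 * n)) atTop l) (h₁ : Tendsto (fun n => u (2 * n + 1)) atTop l) :
    Tendsto u atTop l := by
  intro s hs
  obtain ⟨N₀, hN₀⟩ := eventually_atTop.mp (h₀ hs)
  obtain ⟨N₁, hN₁⟩ := eventually_atTop.mp (h₁ hs)
  refine eventually_atTop.mpr ⟨2 * (N₀ + N₁), fun n hn => ?_⟩
  obtain ⟨k, rfl | rfl⟩ := Nat.even_or_odd' n
  exacts [hN₀ k (by omega), hN₁ k (by omega)]

lemma Finset.sum_range_two_mul {M : Type*} [AddCommMonoid M] (f : ℕ → M) (n : ℕ) :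
    ∑ i ∈ range (2 * n), f i = ∑ q ∈ range n, (f (2 * q) + f (2 * q + 1)) := by
  induction n with
  | zero => simp
  | succ n ih => rw [mul_add_one, sum_range_succ, sum_range_succ, sum_range_succ, ih, add_assoc]

section Ramp

open Finset

/-! The ramp attached to `v : ℕ → ℝ` is the series `rampWeight i * v (rampIdx i)`. Its pairs of
terms `2q, 2q+1` are `2⁻ᵇ • v (b + 1)` and `-2⁻ᵇ • v b`, where block `b = rampBlock q` consists
of `2 ^ b` pairs; so after block `b` the partial sum is `v (b + 1) - v 0`, and in between it
interpolates linearly, by steps tending to `0`. -/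

def rampBlock (q : ℕ) : ℕ := Nat.log 2 (q + 1)

noncomputable def rampWeight (i : ℕ) : ℝ := (-1) ^ i * ((2 : ℝ) ^ rampBlock (i / 2))⁻¹

def rampIdx (i : ℕ) : ℕ := rampBlock (i / 2) + 1 - i % 2

noncomputable def rampPair (v : ℕ → ℝ) (q : ℕ) : ℝ :=
  ((2 : ℝ) ^ rampBlock q)⁻¹ * (v (rampBlock q + 1) - v (rampBlock q))

lemma rampBlock_two_pow_sub_one_add {b J : ℕ} (hJ : J < 2 ^ b) :
    rampBlock (2 ^ b - 1 + J) = b := by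
  have h₁ : 1 ≤ 2 ^ b := Nat.one_le_two_pow
  apply Nat.log_eq_of_pow_le_of_lt_pow
  · omega
  · rw [pow_succ]
    omega

lemma tendsto_rampBlock : Tendsto rampBlock atTop atTop :=
  tendsto_atTop_atTop.mpr fun b => ⟨2 ^ b, fun q hq => Nat.le_log_of_pow_le one_lt_two (by omega)⟩

variable (v : ℕ → ℝ)

lemma ramp_two_mul_add_ramp_two_mul_add_one (q : ℕ) :
    rampWeight (2 * q) * v (rampIdx (2 * q)) + rampWeight (2 * q + 1) * v (rampIdx (2 * q + 1)) =
      rampPair v q := by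
  have h₀ : 2 * q / 2 = q := by omega
  have h₁ : (2 * q + 1) / 2 = q := by omega
  simp only [rampWeight, rampIdx, rampPair, h₀, h₁, Nat.mul_mod_right, Nat.mul_add_mod_self_left,
    Nat.mod_succ, Nat.sub_zero, Nat.add_sub_cancel, pow_succ, pow_mul]
  ring

lemma sum_rampPair_two_pow_sub_one_add {b J : ℕ} (hJ : J ≤ 2 ^ b) :
    ∑ q ∈ range (2 ^ b - 1 + J), rampPair v q =
      ∑ q ∈ range (2 ^ b - 1), rampPair v q + J / 2 ^ b * (v (b + 1) - v b) := by
  induction J with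
  | zero => simp
  | succ J ih =>
    rw [← add_assoc, sum_range_succ, ih (by omega), rampPair,
      rampBlock_two_pow_sub_one_add (by omega)]
    push_cast
    ring

lemma sum_rampPair_two_pow_sub_one (b : ℕ) :
    ∑ q ∈ range (2 ^ b - 1), rampPair v q = v b - v 0 := by
  induction b with
  | zero => simp
  | succ b ih =>
    have h := sum_rampPair_two_pow_sub_one_add v le_rfl (b := b)
    rw [ih, Nat.cast_pow, Nat.cast_ofNat, div_self (by positivity), one_mul] at h
    rw [show 2 ^ (b + 1) - 1 = 2 ^ b - 1 + 2 ^ b by rw [pow_succ]; omega, h]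
    ring

lemma tendsto_sum_rampPair {L : ℝ} (hv : Tendsto v atTop (𝓝 L)) :
    Tendsto (fun Q => ∑ q ∈ range Q, rampPair v q) atTop (𝓝 (L - v 0)) := by
  set b := rampBlock
  set θ : ℕ → ℝ := fun Q => ((Q + 1 - 2 ^ b Q : ℕ) : ℝ) / 2 ^ b Q
  have hsum : ∀ Q, ∑ q ∈ range Q, rampPair v q =
      v (b Q) - v 0 + θ Q * (v (b Q + 1) - v (b Q)) := fun Q => by
    have h₁ : 2 ^ b Q ≤ Q + 1 := Nat.pow_log_le_self 2 Q.succ_ne_zero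
    have h₂ : Q + 1 < 2 ^ (b Q + 1) := Nat.lt_pow_succ_log_self one_lt_two _
    rw [pow_succ] at h₂
    have h := sum_rampPair_two_pow_sub_one_add v (b := b Q) (J := Q + 1 - 2 ^ b Q) (by omega)
    rwa [show 2 ^ b Q - 1 + (Q + 1 - 2 ^ b Q) = Q by omega,
      sum_rampPair_two_pow_sub_one] at h
  have hθ : ∀ Q, ‖θ Q‖ ≤ 1 := fun Q => by
    have h₂ : Q + 1 < 2 ^ (b Q + 1) := Nat.lt_pow_succ_log_self one_lt_two _
    rw [pow_succ] at h₂
    rw [Real.norm_eq_abs, abs_of_nonneg (by positivity), div_le_one (by positivity)]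
    exact_mod_cast (by omega : Q + 1 - 2 ^ b Q ≤ 2 ^ b Q)
  have hb : Tendsto (fun Q => v (b Q)) atTop (𝓝 L) := hv.comp tendsto_rampBlock
  have hb₁ : Tendsto (fun Q => v (b Q + 1)) atTop (𝓝 L) :=
    (hv.comp (tendsto_add_atTop_nat 1)).comp tendsto_rampBlock
  have hstep : Tendsto (fun Q => θ Q * (v (b Q + 1) - v (b Q))) atTop (𝓝 0) := by
    have hd : Tendsto (fun Q => v (b Q + 1) - v (b Q)) atTop (𝓝 0) := by
      simpa using hb₁.sub hb
    refine squeeze_zero_norm (fun Q => ?_) (by simpa using hd.norm)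
    rw [norm_mul]
    exact mul_le_of_le_one_left (norm_nonneg _) (hθ Q)
  simp_rw [hsum]
  simpa using (hb.sub_const (v 0)).add hstep

lemma seriesTendsTo_ramp {L : ℝ} (hv : Tendsto v atTop (𝓝 L)) :
    SeriesTendsTo (fun i => rampWeight i * v (rampIdx i)) (L - v 0) := by
  have heven : ∀ Q, ∑ i ∈ range (2 * Q), rampWeight i * v (rampIdx i) =
      ∑ q ∈ range Q, rampPair v q := fun Q => by
    simp only [sum_range_two_mul, ramp_two_mul_add_ramp_two_mul_add_one]
  have hlast : Tendsto (fun Q => rampWeight (2 * Q) * v (rampIdx (2 * Q))) atTop (𝓝 0) := by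
    have hw : Tendsto (fun Q => ((2 : ℝ) ^ rampBlock Q)⁻¹) atTop (𝓝 0) :=
      tendsto_inv_atTop_zero.comp
        ((tendsto_pow_atTop_atTop_of_one_lt (one_lt_two : (1 : ℝ) < 2)).comp tendsto_rampBlock)
    have h₀ : ∀ Q, 2 * Q / 2 = Q := fun Q => by omega
    simpa [rampWeight, rampIdx, h₀, pow_mul] using
      hw.mul ((hv.comp (tendsto_add_atTop_nat 1)).comp tendsto_rampBlock)
  refine Tendsto.of_two_mul_of_two_mul_add_one ?_ ?_
  · simpa only [heven] using tendsto_sum_rampPair v hv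
  · simpa only [sum_range_succ, heven, add_zero] using (tendsto_sum_rampPair v hv).add hlast

end Ramp

def HasDisjointPositiveSeq (C : Set (Set Ω)) (P : Set Ω → ℝ) : Prop :=
  ∃ E : ℕ → Set Ω, (∀ k, E k ∈ C) ∧ Pairwise (Function.onFun Disjoint E) ∧ ∀ k, 0 < P (E k)

section DisjointSeq

variable {C : Set (Set Ω)} {P : Set Ω → ℝ}

lemma CoherentIn.not_hasDisjointPositiveSeq (h : CoherentIn P (System3 C P)) :
    ¬ HasDisjointPositiveSeq C P := by
  rintro ⟨E, hE, hdisj, hpos⟩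
  -- `c 0 = 0` makes the ramp start from the empty portfolio.
  let c : ℕ → ℝ := fun k => if k = 0 then 0 else (P (E k))⁻¹
  have hprice : Tendsto (fun k => c k * P (E k)) atTop (𝓝 1) :=
    tendsto_const_nhds.congr' <| eventually_atTop.mpr ⟨1, fun k hk => by
      simp [c, show k ≠ 0 by omega, inv_mul_cancel₀ (hpos k).ne']⟩
  have hind : ∀ ω, Tendsto (fun k => c k * ind (E k) ω) atTop (𝓝 0) := fun ω => by
    have hfin : {k | ω ∈ E k}.Finite := Set.Subsingleton.finite fun k hk l hl => by
      by_contra hkl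
      exact Set.disjoint_left.mp (hdisj hkl) hk hl
    refine tendsto_const_nhds.congr' ?_
    filter_upwards [Nat.cofinite_eq_atTop ▸ hfin.eventually_cofinite_notMem] with k hk
    simp [ind_of_notMem hk]
  refine h (incoherentIn_system3_of_seriesTendsTo (α := fun i => rampWeight i * c (rampIdx i))
    (A := fun i => E (rampIdx i)) (L := 1) (Y := fun _ => 0) (fun i => hE _) ?_ (fun ω => ?_)
    one_pos fun ω => by norm_num)
  · simpa [mul_assoc, c] using seriesTendsTo_ramp _ hprice
  · simpa [mul_assoc, c] using seriesTendsTo_ramp _ (hind ω)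

lemma hasDisjointPositiveSeq_of_forall_split {Q : Set Ω → Prop} {R₀ : Set Ω} (h₀ : Q R₀)
    (hsplit : ∀ R, Q R → ∃ N ⊆ R, N ∈ C ∧ 0 < P N ∧ Q (R \ N)) :
    HasDisjointPositiveSeq C P := by
  choose! N hNR hNC hNpos hQ using hsplit
  let R : ℕ → Set Ω := fun k => (fun S => S \ N S)^[k] R₀
  have hR_succ : ∀ k, R (k + 1) = R k \ N (R k) := fun k => Function.iterate_succ_apply' _ _ _
  have hRQ : ∀ k, Q (R k) := fun k => by
    induction k with
    | zero => exact h₀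
    | succ k ih => exact hR_succ k ▸ hQ _ ih
  have hR_anti : Antitone R := antitone_nat_of_succ_le fun k => hR_succ k ▸ Set.sdiff_subset
  refine ⟨fun k => N (R k), fun k => hNC _ (hRQ k), (pairwise_disjoint_on _).mpr fun k l hkl => ?_,
    fun k => hNpos _ (hRQ k)⟩
  have hl : N (R l) ⊆ R k \ N (R k) := (hNR _ (hRQ l)).trans (hR_succ k ▸ hR_anti hkl)
  exact Disjoint.mono_right hl Set.disjoint_sdiff_right

end DisjointSeq

section Atoms

variable {C : Set (Set Ω)} {P : Set Ω → ℝ} {F R : Set Ω}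

lemma IsPAtom.of_subset_of_null_diff (hF : IsPAtom C P F) (hC : IsSetRing C)
    (hadd : IsFinitelyAdditive C P) (hnn : ∀ A ∈ C, 0 ≤ P A) (hR : R ∈ C) (hFR : F ⊆ R)
    (h0 : P (R \ F) = 0) : IsPAtom C P R := by
  obtain ⟨hFC, hFpos, hFat⟩ := hF
  have hPR : P R = P F := by linarith [hadd.diff hC hR hFC hFR]
  refine ⟨hR, hPR ▸ hFpos, fun B hB hBR => ?_⟩
  have hBF := hadd _ (hC.inter_mem hB hFC) _ (hC.sdiff_mem hB hFC)
    (Disjoint.mono_left Set.inter_subset_right Set.disjoint_sdiff_right)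
  rw [Set.inter_union_sdiff] at hBF
  have hBF0 : P (B \ F) = 0 := le_antisymm
    (h0 ▸ hadd.mono hC hnn (hC.sdiff_mem hR hFC) (hC.sdiff_mem hB hFC)
      (Set.sdiff_subset_sdiff_left hBR))
    (hnn _ (hC.sdiff_mem hB hFC))
  rcases hFat _ (hC.inter_mem hB hFC) Set.inter_subset_right with h | h
  · exact Or.inl (by linarith)
  · exact Or.inr (by linarith)

lemma exists_isPAtom_subset (hC : IsSetRing C) (hadd : IsFinitelyAdditive C P)
    (hnn : ∀ A ∈ C, 0 ≤ P A) (hNF : ¬ HasDisjointPositiveSeq C P) (hR : R ∈ C) (hpos : 0 < P R) :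
    ∃ F ⊆ R, IsPAtom C P F := by
  by_contra hno
  push Not at hno
  refine hNF (hasDisjointPositiveSeq_of_forall_split (Q := fun S => S ∈ C ∧ 0 < P S ∧ S ⊆ R)
    ⟨hR, hpos, subset_rfl⟩ ?_)
  rintro S ⟨hS, hSpos, hSR⟩
  have hS_not := hno S hSR
  simp only [IsPAtom, not_and, not_forall] at hS_not
  obtain ⟨B, hB, hBS, hB_ne⟩ := hS_not hS hSpos
  push Not at hB_ne
  have hBS_le := hadd.mono hC hnn hS hB hBS
  refine ⟨B, hBS, hB, lt_of_le_of_ne (hnn B hB) (Ne.symm hB_ne.2), hC.sdiff_mem hS hB, ?_,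
    Set.sdiff_subset.trans hSR⟩
  rw [hadd.diff hC hS hB hBS]
  exact sub_pos.mpr (lt_of_le_of_ne hBS_le hB_ne.1)

def IsAtomicPartition (C : Set (Set Ω)) (P : Set Ω → ℝ) (𝓕 : Finset (Set Ω)) (R : Set Ω) :
    Prop :=
  (∀ F ∈ 𝓕, IsPAtom C P F) ∧ (𝓕 : Set (Set Ω)).PairwiseDisjoint id ∧ ⋃₀ (𝓕 : Set (Set Ω)) = R

lemma isAtomicPartition_singleton (hR : IsPAtom C P R) : IsAtomicPartition C P {R} R := by
  simp [IsAtomicPartition, hR]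

lemma IsAtomicPartition.insert {𝓕 : Finset (Set Ω)} (h : IsAtomicPartition C P 𝓕 (R \ F))
    (hF : IsPAtom C P F) (hFR : F ⊆ R) : IsAtomicPartition C P (insert F 𝓕) R := by
  classical
  obtain ⟨hatoms, hdisj, hunion⟩ := h
  have hsub : ∀ G ∈ 𝓕, G ⊆ R \ F := fun G hG => hunion ▸ Set.subset_sUnion_of_mem hG
  refine ⟨fun G hG => ?_, ?_, ?_⟩
  · rcases Finset.mem_insert.mp hG with rfl | hG
    exacts [hF, hatoms G hG]
  · rw [Finset.coe_insert, Set.pairwiseDisjoint_insert]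
    exact ⟨hdisj, fun G hG _ => Disjoint.mono_right (hsub G hG) Set.disjoint_sdiff_right⟩
  · rw [Finset.coe_insert, Set.sUnion_insert, hunion, Set.union_sdiff_cancel hFR]

lemma exists_isAtomicPartition (hC : IsSetRing C) (hadd : IsFinitelyAdditive C P)
    (hnn : ∀ A ∈ C, 0 ≤ P A) (hNF : ¬ HasDisjointPositiveSeq C P) (hR : R ∈ C) (hpos : 0 < P R) :
    ∃ 𝓕, IsAtomicPartition C P 𝓕 R := by
  by_contra hno
  refine hNF (hasDisjointPositiveSeq_of_forall_split
    (Q := fun S => S ∈ C ∧ 0 < P S ∧ ¬ ∃ 𝓕, IsAtomicPartition C P 𝓕 S) ⟨hR, hpos, hno⟩ ?_)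
  rintro S ⟨hS, hSpos, hSno⟩
  obtain ⟨F, hFS, hF⟩ := exists_isPAtom_subset hC hadd hnn hNF hS hSpos
  have hSF : S \ F ∈ C := hC.sdiff_mem hS hF.1
  have hSF_pos : 0 < P (S \ F) := lt_of_le_of_ne (hnn _ hSF) fun h0 =>
    hSno ⟨_, isAtomicPartition_singleton (hF.of_subset_of_null_diff hC hadd hnn hS hFS h0.symm)⟩
  exact ⟨F, hFS, hF.1, hF.2.1, hSF, hSF_pos, fun ⟨𝓕, h𝓕⟩ => hSno ⟨_, h𝓕.insert hF hFS⟩⟩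

lemma IsAtomicPartition.finiteAtomicPartition {𝓕 : Finset (Set Ω)}
    (h : IsAtomicPartition C P 𝓕 Set.univ) : FiniteAtomicPartition C P := by
  obtain ⟨hatoms, hdisj, hunion⟩ := h
  let e := 𝓕.equivFin.symm
  refine ⟨𝓕.card, fun j => e j, fun j => hatoms _ (e j).2, fun i j hij => ?_, ?_⟩
  · exact hdisj (e i).2 (e j).2 fun h => hij (e.injective (Subtype.ext h))
  · rw [← hunion, Set.sUnion_eq_iUnion]
    exact e.surjective.iUnion_comp fun G : 𝓕 => (G : Set Ω)

end Atoms

section Converse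

variable {C : Set (Set Ω)} {P : Set Ω → ℝ}

lemma IsCAProb.isFinitelyAdditive (hP : IsCAProb C P) : IsFinitelyAdditive C P := hP.2.2.1

lemma IsCAProb.iUnion_null (hP : IsCAProb C P) (hC : IsSetRing C) {N : ℕ → Set Ω}
    (hN : ∀ i, N i ∈ C) (h0 : ∀ i, P (N i) = 0) (hU : ⋃ i, N i ∈ C) : P (⋃ i, N i) = 0 := by
  have hdN : ∀ i, disjointed N i ∈ C := hC.disjointed_mem hN
  have hsum := hP.2.2.2 (disjointed N) hdN (disjoint_disjointed N)
    (by rwa [iUnion_disjointed])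
  have hz : ∀ i, P (disjointed N i) = 0 := fun i => le_antisymm
    (h0 i ▸ hP.isFinitelyAdditive.mono hC hP.2.1 (hN i) (hdN i) (disjointed_subset N i))
    (hP.2.1 _ (hdN i))
  simp_rw [hz, iUnion_disjointed] at hsum
  exact hsum.unique hasSum_zero

lemma IsPAtom.exists_mem_forall_inter {F : Set Ω} (hF : IsPAtom C P F) (hC : IsSetRing C)
    (hP : IsCAProb C P) {A : ℕ → Set Ω} (hA : ∀ i, A i ∈ C) :
    ∃ ω ∈ F, ∀ i, P (F ∩ A i) = P F * ind (A i) ω := by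
  obtain ⟨hFC, hFpos, hFat⟩ := hF
  by_contra hno
  push Not at hno
  -- `N i` is the null part of `F` on which `A i` disagrees with its measure in `F`.
  let N : ℕ → Set Ω := fun i => if P (F ∩ A i) = 0 then F ∩ A i else F \ A i
  have hNC : ∀ i, N i ∈ C := fun i => by
    dsimp only [N]
    split_ifs
    exacts [hC.inter_mem hFC (hA i), hC.sdiff_mem hFC (hA i)]
  have hN0 : ∀ i, P (N i) = 0 := fun i => by
    dsimp only [N]
    split_ifs with h
    · exact h
    · have hdiff := hP.isFinitelyAdditive.diff hC hFC (hC.inter_mem hFC (hA i))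
        Set.inter_subset_left
      rw [Set.sdiff_self_inter] at hdiff
      rcases hFat _ (hC.inter_mem hFC (hA i)) Set.inter_subset_left with h' | h'
      exacts [by linarith, absurd h' h]
  have hN_union : ⋃ i, N i = F := by
    refine Set.Subset.antisymm (Set.iUnion_subset fun i => ?_) fun ω hω => ?_
    · dsimp only [N]
      split_ifs
      exacts [Set.inter_subset_left, Set.sdiff_subset]
    · obtain ⟨i, hi⟩ := hno ω hω
      refine Set.mem_iUnion.mpr ⟨i, ?_⟩
      dsimp only [N]
      by_cases hωA : ω ∈ A i
      · rcases hFat _ (hC.inter_mem hFC (hA i)) Set.inter_subset_left with h | h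
        · simp [hωA, h] at hi
        · simp [h, hω, hωA]
      · have h : P (F ∩ A i) ≠ 0 := by simpa [hωA] using hi
        simp [h, hω, hωA]
  have h0 := hP.iUnion_null hC hNC hN0 (hN_union ▸ hFC)
  rw [hN_union] at h0
  linarith

lemma coherentIn_system3_of_finite_representation {ι : Type*} [Fintype ι] (q : ι → ℝ)
    (hq : ∀ j, 0 ≤ q j) (hq1 : ∑ j, q j = 1)
    (hrep : ∀ A : ℕ → Set Ω, (∀ i, A i ∈ C) →
      ∃ x : ι → Ω, ∀ i, ∑ j, q j * ind (A i) (x j) = P (A i)) :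
    CoherentIn P (System3 C P) := by
  rintro ⟨α, A, ⟨hA, -, -⟩, ε, hε, hloss⟩
  obtain ⟨x, hx⟩ := hrep A hA
  choose L hL hLε using fun j => hloss (x j)
  have hmean : ∀ n, ∑ j, q j * ∑ i ∈ Finset.range n, bterm P α A (x j) i = 0 := fun n => by
    simp_rw [Finset.mul_sum]
    rw [Finset.sum_comm]
    refine Finset.sum_eq_zero fun i _ => ?_
    calc ∑ j, q j * bterm P α A (x j) i
        = ∑ j, (α i * (q j * ind (A i) (x j)) - α i * P (A i) * q j) :=
          Finset.sum_congr rfl fun j _ => by simp only [bterm]; ring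
      _ = 0 := by
          rw [Finset.sum_sub_distrib, ← Finset.mul_sum, ← Finset.mul_sum, hx i, hq1]
          ring
  have hlim : Tendsto (fun n => ∑ j, q j * ∑ i ∈ Finset.range n, bterm P α A (x j) i) atTop
      (𝓝 (∑ j, q j * L j)) :=
    tendsto_finsetSum _ fun j _ => Tendsto.const_mul (q j) (hL j)
  have h0 : ∑ j, q j * L j = 0 :=
    tendsto_nhds_unique hlim (by simp only [hmean]; exact tendsto_const_nhds)
  have hle : ∑ j, q j * L j ≤ -ε := calc
    ∑ j, q j * L j ≤ ∑ j, q j * (-ε) :=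
      Finset.sum_le_sum fun j _ => mul_le_mul_of_nonneg_left (hLε j) (hq j)
    _ = -ε := by rw [← Finset.sum_mul, hq1, one_mul]
  linarith

lemma coherentIn_system3_of_isCAProb (hC : IsSetRing C) (hP : IsCAProb C P)
    (hpart : FiniteAtomicPartition C P) : CoherentIn P (System3 C P) := by
  obtain ⟨n, F, hF, hdisj, hcov⟩ := hpart
  have hadd := hP.isFinitelyAdditive
  have hsplit : ∀ B ∈ C, ∑ j, P (F j ∩ B) = P B := fun B hB => by
    rw [← hadd.biUnion hC Finset.univ (fun j _ => hC.inter_mem (hF j).1 hB)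
      ((hdisj.mono fun i j h => h.mono Set.inter_subset_left Set.inter_subset_left).set_pairwise _)]
    simp [← Set.iUnion_inter, hcov]
  refine coherentIn_system3_of_finite_representation (fun j => P (F j)) (fun j => (hF j).2.1.le)
    ?_ fun A hA => ?_
  · rw [← hadd.biUnion hC Finset.univ (fun j _ => (hF j).1) (hdisj.set_pairwise _)]
    simp [hcov, hP.1]
  · choose x _ hx using fun j => (hF j).exists_mem_forall_inter hC hP hA
    exact ⟨x, fun i => (hsplit _ (hA i)) ▸ Finset.sum_congr rfl fun j _ => (hx j i).symm⟩

end Converse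

theorem stmt10 (C : Set (Set Ω)) (P : Set Ω → ℝ) (hC : IsSetField C) :
    CoherentIn P (System3 C P) ↔
      (IsCAProb C P ∧ FiniteAtomicPartition C P) := by
  have hC' := hC.isSetAlgebra
  refine ⟨fun h => ?_, fun ⟨hP, hpart⟩ => coherentIn_system3_of_isCAProb hC'.isSetRing hP hpart⟩
  have hP := h.isCAProb hC'
  obtain ⟨𝓕, h𝓕⟩ := exists_isAtomicPartition hC'.isSetRing hP.isFinitelyAdditive hP.2.1
    h.not_hasDisjointPositiveSeq hC'.univ_mem (hP.1 ▸ one_pos)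
  exact ⟨hP, h𝓕.finiteAtomicPartition⟩
end
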